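/- Let α ∈ (1,2) and 0 < β < 1. Then ∫_0^∞ [(1+z)^β − 1 − βz] μ_α(dz) = −β(1−β)Γ(α−β)/(Γ(α)Γ(2−β)). -/

import Mathlib

/-!
Write `f(z) = (1 + z)^β - 1 - βz`. Integrating by parts twice moves both derivatives onto the
kernel: `∫₀^∞ f(z) z^(-1-α) dz = ∫₀^∞ f''(z) z^(1-α) dz / (α(α-1))`. The boundary terms vanish
because `|f(z)| ≤ z min(z, 1)` and `|f'(z)| ≤ min(z, 1)` while `1 < α < 2`. Since
`f''(z) = β(β-1)(1+z)^(β-2)`, what remains is the Beta integral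
`∫₀^∞ z^(1-α) (1+z)^(β-2) dz = Γ(2-α)Γ(α-β)/Γ(2-β)`, which the substitution `t = x/(1-x)`
reduces to Euler's integral over `(0, 1)`.
-/

open MeasureTheory Set Real Filter Topology

lemma ofReal_rpow_mul_one_sub_rpow {a b x : ℝ} (hx : x ∈ Ioo (0:ℝ) 1) :
    ((x ^ (a - 1) * (1 - x) ^ (b - 1) : ℝ) : ℂ)
      = (x : ℂ) ^ ((a : ℂ) - 1) * (1 - (x : ℂ)) ^ ((b : ℂ) - 1) := by
  push_cast
  rw [Complex.ofReal_cpow hx.1.le, Complex.ofReal_cpow (sub_nonneg.2 hx.2.le)]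
  push_cast
  ring

lemma integrableOn_Ioo_rpow_mul_one_sub_rpow {a b : ℝ} (ha : 0 < a) (hb : 0 < b) :
    IntegrableOn (fun x : ℝ => x ^ (a - 1) * (1 - x) ^ (b - 1)) (Ioo 0 1) := by
  have h := Complex.betaIntegral_convergent (u := a) (v := b) (by simpa) (by simpa)
  rw [intervalIntegrable_iff_integrableOn_Ioo_of_le zero_le_one] at h
  refine IntegrableOn.congr_fun h.re (fun x hx => ?_) measurableSet_Ioo
  rw [← ofReal_rpow_mul_one_sub_rpow hx, RCLike.re_to_complex, Complex.ofReal_re]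

lemma integral_Ioo_rpow_mul_one_sub_rpow {a b : ℝ} (ha : 0 < a) (hb : 0 < b) :
    ∫ x in Ioo (0:ℝ) 1, x ^ (a - 1) * (1 - x) ^ (b - 1)
      = Gamma a * Gamma b / Gamma (a + b) := by
  rw [← ProbabilityTheory.beta, ProbabilityTheory.beta_eq_betaIntegralReal a b ha hb,
    Complex.betaIntegral, intervalIntegral.integral_of_le zero_le_one,
    integral_Ioc_eq_integral_Ioo, ← Complex.ofReal_re (∫ x in Ioo (0:ℝ) 1, _),
    ← integral_complex_ofReal,
    setIntegral_congr_fun measurableSet_Ioo fun x hx => ofReal_rpow_mul_one_sub_rpow hx]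

lemma image_div_one_sub_Ioo : (fun x : ℝ => x / (1 - x)) '' Ioo 0 1 = Ioi 0 := by
  ext t
  refine ⟨?_, fun ht => ⟨t / (1 + t), ?_, ?_⟩⟩
  · rintro ⟨x, ⟨hx₀, hx₁⟩, rfl⟩
    exact div_pos hx₀ (sub_pos.2 hx₁)
  · have ht : 0 < t := ht
    exact ⟨by positivity, (div_lt_one (by positivity)).2 (by linarith)⟩
  · have ht : 0 < t := ht
    field_simp
    ring

lemma injOn_div_one_sub : InjOn (fun x : ℝ => x / (1 - x)) (Ioo 0 1) := by
  rintro x ⟨-, hx⟩ y ⟨-, hy⟩ h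
  have := sub_pos.2 hx
  have := sub_pos.2 hy
  field_simp at h
  linarith

lemma hasDerivAt_div_one_sub {x : ℝ} (hx : x ≠ 1) :
    HasDerivAt (fun x : ℝ => x / (1 - x)) ((1 - x)⁻¹ ^ 2) x := by
  have hx' : 1 - x ≠ 0 := sub_ne_zero.2 hx.symm
  refine ((hasDerivAt_id' x).div ((hasDerivAt_id' x).const_sub 1) hx').congr_deriv ?_
  field_simp
  ring

lemma abs_deriv_smul_rpow_mul_one_add_rpow {a b x : ℝ} (hx : x ∈ Ioo (0:ℝ) 1) :
    |(1 - x)⁻¹ ^ 2| • ((x / (1 - x)) ^ (a - 1) * (1 + x / (1 - x)) ^ (-(a + b)))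
      = x ^ (a - 1) * (1 - x) ^ (b - 1) := by
  obtain ⟨hx₀, hx₁⟩ := hx
  have h : 0 < 1 - x := sub_pos.2 hx₁
  have h_one_add : 1 + x / (1 - x) = (1 - x)⁻¹ := by field_simp; ring
  have h_split : (1 - x) ^ (a + b) = (1 - x) ^ (b - 1) * (1 - x) ^ (a - 1) * (1 - x) ^ (2:ℝ) := by
    rw [← rpow_add h, ← rpow_add h]
    ring_nf
  rw [smul_eq_mul, abs_of_nonneg (by positivity), h_one_add, inv_rpow h.le, rpow_neg h.le, inv_inv,
    div_rpow hx₀.le h.le, h_split, rpow_two]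
  field_simp

lemma integrableOn_Ioi_rpow_mul_one_add_rpow {a b : ℝ} (ha : 0 < a) (hb : 0 < b) :
    IntegrableOn (fun t : ℝ => t ^ (a - 1) * (1 + t) ^ (-(a + b))) (Ioi 0) := by
  rw [← image_div_one_sub_Ioo, integrableOn_image_iff_integrableOn_abs_deriv_smul measurableSet_Ioo
    (fun x hx => (hasDerivAt_div_one_sub hx.2.ne).hasDerivWithinAt) injOn_div_one_sub]
  exact (integrableOn_Ioo_rpow_mul_one_sub_rpow ha hb).congr_fun
    (fun x hx => (abs_deriv_smul_rpow_mul_one_add_rpow hx).symm) measurableSet_Ioo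

lemma integral_Ioi_rpow_mul_one_add_rpow {a b : ℝ} (ha : 0 < a) (hb : 0 < b) :
    ∫ t in Ioi (0:ℝ), t ^ (a - 1) * (1 + t) ^ (-(a + b))
      = Gamma a * Gamma b / Gamma (a + b) := by
  rw [← image_div_one_sub_Ioo, integral_image_eq_integral_abs_deriv_smul measurableSet_Ioo
    (fun x hx => (hasDerivAt_div_one_sub hx.2.ne).hasDerivWithinAt) injOn_div_one_sub,
    setIntegral_congr_fun measurableSet_Ioo fun x hx => abs_deriv_smul_rpow_mul_one_add_rpow hx]
  exact integral_Ioo_rpow_mul_one_sub_rpow ha hb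

lemma integrableOn_Ioi_rpow_mul_min_one {r : ℝ} (hr₀ : -2 < r) (hr₁ : r < -1) :
    IntegrableOn (fun z : ℝ => z ^ r * min z 1) (Ioi 0) := by
  rw [← Ioc_union_Ioi_eq_Ioi zero_le_one]
  refine IntegrableOn.union ?_ ?_
  · have h := intervalIntegral.intervalIntegrable_rpow' (r := r + 1) (by linarith) (a := 0) (b := 1)
    rw [intervalIntegrable_iff_integrableOn_Ioc_of_le zero_le_one] at h
    refine h.congr_fun (fun z hz => ?_) measurableSet_Ioc
    dsimp only
    rw [min_eq_left hz.2, rpow_add_one hz.1.ne']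
  · refine (integrableOn_Ioi_rpow_of_lt hr₁ one_pos).congr_fun (fun z hz => ?_) measurableSet_Ioi
    rw [min_eq_right (le_of_lt hz), mul_one]

lemma tendsto_rpow_mul_min_one_nhdsGT_zero {r : ℝ} (hr : -1 < r) :
    Tendsto (fun z : ℝ => z ^ r * min z 1) (𝓝[>] 0) (𝓝 0) := by
  have h := (continuousAt_rpow_const 0 (r + 1) (Or.inr (by linarith))).tendsto
  rw [zero_rpow (by linarith)] at h
  refine (h.mono_left nhdsWithin_le_nhds).congr' ?_
  filter_upwards [Ioo_mem_nhdsGT zero_lt_one] with z hz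
  rw [min_eq_left hz.2.le, rpow_add_one hz.1.ne']

lemma tendsto_rpow_mul_min_one_atTop {r : ℝ} (hr : r < 0) :
    Tendsto (fun z : ℝ => z ^ r * min z 1) atTop (𝓝 0) := by
  have h := tendsto_rpow_neg_atTop (y := -r) (by linarith)
  rw [neg_neg] at h
  refine h.congr' ?_
  filter_upwards [eventually_ge_atTop 1] with z hz
  rw [min_eq_right hz, mul_one]

lemma abs_mul_rpow_le_rpow_mul_min_one {a q p z : ℝ} (hz : 0 < z)
    (ha : |a| ≤ z ^ q * min z 1) : |a * z ^ p| ≤ z ^ (q + p) * min z 1 := by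
  rw [abs_mul, abs_of_nonneg (rpow_nonneg hz.le p), rpow_add hz, mul_right_comm]
  exact mul_le_mul_of_nonneg_right ha (rpow_nonneg hz.le p)

section RpowMulMinOneBound

variable {g : ℝ → ℝ} {r : ℝ}

lemma integrableOn_Ioi_of_abs_le_rpow_mul_min_one
    (hg : AEStronglyMeasurable g (volume.restrict (Ioi 0))) (hr₀ : -2 < r) (hr₁ : r < -1)
    (hbound : ∀ z ∈ Ioi (0:ℝ), |g z| ≤ z ^ r * min z 1) : IntegrableOn g (Ioi 0) :=
  (integrableOn_Ioi_rpow_mul_min_one hr₀ hr₁).mono' hg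
    (ae_restrict_of_forall_mem measurableSet_Ioi hbound)

lemma tendsto_nhdsGT_zero_of_abs_le_rpow_mul_min_one (hr : -1 < r)
    (hbound : ∀ z ∈ Ioi (0:ℝ), |g z| ≤ z ^ r * min z 1) : Tendsto g (𝓝[>] 0) (𝓝 0) :=
  squeeze_zero_norm' (eventually_mem_nhdsWithin.mono hbound)
    (tendsto_rpow_mul_min_one_nhdsGT_zero hr)

lemma tendsto_atTop_of_abs_le_rpow_mul_min_one (hr : r < 0)
    (hbound : ∀ z ∈ Ioi (0:ℝ), |g z| ≤ z ^ r * min z 1) : Tendsto g atTop (𝓝 0) :=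
  squeeze_zero_norm' ((eventually_gt_atTop 0).mono hbound) (tendsto_rpow_mul_min_one_atTop hr)

end RpowMulMinOneBound

lemma integral_Ioi_mul_rpow_sub_one {u u' : ℝ → ℝ} {p q : ℝ} (hp : p ≠ 0)
    (hqp₀ : -1 < q + p) (hqp₁ : q + p < 0) (hu : ∀ z ∈ Ioi (0:ℝ), HasDerivAt u (u' z) z)
    (hbound : ∀ z ∈ Ioi (0:ℝ), |u z| ≤ z ^ q * min z 1)
    (hu' : IntegrableOn (fun z => u' z * z ^ p) (Ioi 0)) :
    ∫ z in Ioi (0:ℝ), u z * z ^ (p - 1) = -(∫ z in Ioi (0:ℝ), u' z * z ^ p) / p := by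
  have hv : ∀ z ∈ Ioi (0:ℝ), HasDerivAt (fun z => z ^ p / p) (z ^ (p - 1)) z := fun z hz =>
    ((hasDerivAt_rpow_const (Or.inl (ne_of_gt hz))).div_const p).congr_deriv (by field_simp)
  have hu_cont : ContinuousOn u (Ioi 0) := fun z hz => (hu z hz).continuousAt.continuousWithinAt
  have hrpow_cont : ContinuousOn (fun z : ℝ => z ^ (p - 1)) (Ioi 0) := fun z hz =>
    (continuousAt_rpow_const _ _ (Or.inl (ne_of_gt hz))).continuousWithinAt
  have huv' : IntegrableOn (fun z => u z * z ^ (p - 1)) (Ioi 0) :=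
    integrableOn_Ioi_of_abs_le_rpow_mul_min_one (r := q + (p - 1))
      ((hu_cont.mul hrpow_cont).aestronglyMeasurable measurableSet_Ioi) (by linarith)
      (by linarith) fun z hz => abs_mul_rpow_le_rpow_mul_min_one hz (hbound z hz)
  have huv_bound : ∀ z ∈ Ioi (0:ℝ), |u z * z ^ p| ≤ z ^ (q + p) * min z 1 := fun z hz =>
    abs_mul_rpow_le_rpow_mul_min_one hz (hbound z hz)
  have h_zero := (tendsto_nhdsGT_zero_of_abs_le_rpow_mul_min_one hqp₀ huv_bound).div_const p
  have h_top := (tendsto_atTop_of_abs_le_rpow_mul_min_one hqp₁ huv_bound).div_const p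
  simp only [zero_div, mul_div_assoc] at h_zero h_top
  rw [integral_Ioi_mul_deriv_eq_deriv_mul hu hv huv' ?_ h_zero h_top]
  · simp only [← mul_div_assoc, integral_div]
    ring
  · simpa only [IntegrableOn, Pi.mul_def, ← mul_div_assoc] using hu'.div_const p

section OneAddRpow

lemma one_add_mul_self_le_rpow_one_add_of_nonpos {s p : ℝ} (hs : 0 ≤ s) (hp₀ : -1 ≤ p)
    (hp : p ≤ 0) : 1 + p * s ≤ (1 + s) ^ p := by
  have h_pos : 0 < (1 + s) ^ (-p) := rpow_pos_of_pos (by linarith) _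
  have h_one : 1 ≤ (1 + s) ^ (-p) := one_le_rpow (by linarith) (by linarith)
  have h_bernoulli : (1 + s) ^ (-p) ≤ 1 + -p * s :=
    rpow_one_add_le_one_add_mul_self (by linarith) (by linarith) (by linarith)
  rw [← neg_neg p, rpow_neg (by linarith), neg_neg, inv_eq_one_div, le_div_iff₀ h_pos]
  nlinarith [mul_nonneg hs (neg_nonneg.2 hp)]

variable {α β z : ℝ}

lemma abs_mul_one_add_rpow_sub_one_sub_one_le (hβ₀ : 0 ≤ β) (hβ₁ : β ≤ 1) (hz : 0 ≤ z) :
    |β * ((1 + z) ^ (β - 1) - 1)| ≤ min z 1 := by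
  have h_le_one : (1 + z) ^ (β - 1) ≤ 1 :=
    rpow_le_one_of_one_le_of_nonpos (by linarith) (by linarith)
  have h_nonneg : 0 ≤ (1 + z) ^ (β - 1) := rpow_nonneg (by linarith) _
  have h_lower := one_add_mul_self_le_rpow_one_add_of_nonpos hz (p := β - 1) (by linarith)
    (by linarith)
  refine le_min (abs_le.2 ⟨?_, ?_⟩) (abs_le.2 ⟨?_, ?_⟩) <;> nlinarith

lemma abs_one_add_rpow_sub_one_sub_mul_le (hβ₀ : 0 ≤ β) (hβ₁ : β ≤ 1) (hz : 0 ≤ z) :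
    |(1 + z) ^ β - 1 - β * z| ≤ z * min z 1 := by
  have h_upper : (1 + z) ^ β ≤ 1 + β * z :=
    rpow_one_add_le_one_add_mul_self (by linarith) hβ₀ hβ₁
  have h_one : 1 ≤ (1 + z) ^ β := one_le_rpow (by linarith) hβ₀
  have h_lower : (1 + z) * (1 + (β - 1) * z) ≤ (1 + z) ^ β := by
    rw [← mul_div_cancel₀ ((1 + z) ^ β) (by linarith : 1 + z ≠ 0), ← rpow_sub_one (by linarith)]
    exact mul_le_mul_of_nonneg_left
      (one_add_mul_self_le_rpow_one_add_of_nonpos hz (by linarith) (by linarith)) (by linarith)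
  rw [abs_le]
  rcases le_total z 1 with h | h
  · rw [min_eq_left h]; constructor <;> nlinarith
  · rw [min_eq_right h]; constructor <;> nlinarith

lemma hasDerivAt_one_add_rpow_sub_one_sub_mul (hz : -1 < z) :
    HasDerivAt (fun z => (1 + z) ^ β - 1 - β * z) (β * ((1 + z) ^ (β - 1) - 1)) z := by
  have h := (((hasDerivAt_id' z).const_add 1).rpow_const (p := β) (Or.inl (by linarith))).sub_const 1
  refine (h.sub ((hasDerivAt_id' z).const_mul β)).congr_deriv ?_
  ring

lemma hasDerivAt_mul_one_add_rpow_sub_one_sub_one (hz : -1 < z) :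
    HasDerivAt (fun z => β * ((1 + z) ^ (β - 1) - 1)) (β * (β - 1) * (1 + z) ^ (β - 2)) z := by
  have h := (((hasDerivAt_id' z).const_add 1).rpow_const (p := β - 1)
    (Or.inl (by linarith))).sub_const 1
  refine (h.const_mul β).congr_deriv ?_
  rw [show β - 1 - 1 = β - 2 by ring]
  ring

lemma integral_Ioi_mul_one_add_rpow_sub_one_sub_one_mul_rpow (hα₁ : 1 < α) (hα₂ : α < 2)
    (hβ₀ : 0 ≤ β) (hβ₁ : β ≤ 1) :
    ∫ z in Ioi (0:ℝ), β * ((1 + z) ^ (β - 1) - 1) * z ^ (-α)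
      = β * (β - 1) * (Gamma (2 - α) * Gamma (α - β) / Gamma (2 - β)) / (α - 1) := by
  have h_beta := integral_Ioi_rpow_mul_one_add_rpow (a := 2 - α) (b := α - β) (by linarith)
    (by linarith)
  have h_beta_int := integrableOn_Ioi_rpow_mul_one_add_rpow (a := 2 - α) (b := α - β)
    (by linarith) (by linarith)
  simp only [show 2 - α - 1 = 1 - α by ring, show 2 - α + (α - β) = 2 - β by ring, neg_sub]
    at h_beta h_beta_int
  have hf'_bound (z : ℝ) (hz : z ∈ Ioi 0) :
      |β * ((1 + z) ^ (β - 1) - 1)| ≤ z ^ (0:ℝ) * min z 1 := by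
    simpa only [rpow_zero, one_mul] using abs_mul_one_add_rpow_sub_one_sub_one_le hβ₀ hβ₁ hz.out.le
  have hf''_int :
      IntegrableOn (fun z => β * (β - 1) * (1 + z) ^ (β - 2) * z ^ (1 - α)) (Ioi 0) :=
    IntegrableOn.congr_fun (h_beta_int.const_mul (β * (β - 1))) (fun z _ => by ring)
      measurableSet_Ioi
  have h_parts := integral_Ioi_mul_rpow_sub_one (p := 1 - α) (by linarith) (by linarith)
    (by linarith) (fun z hz => hasDerivAt_mul_one_add_rpow_sub_one_sub_one (by linarith [hz.out]))
    hf'_bound hf''_int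
  have h_const : ∫ z in Ioi (0:ℝ), β * (β - 1) * (1 + z) ^ (β - 2) * z ^ (1 - α)
      = β * (β - 1) * ∫ z in Ioi (0:ℝ), z ^ (1 - α) * (1 + z) ^ (β - 2) := by
    rw [← integral_const_mul]
    congr 1 with z
    ring
  rw [sub_sub_cancel_left] at h_parts
  rw [h_parts, h_const, h_beta]
  have : α - 1 ≠ 0 := by linarith
  have : 1 - α ≠ 0 := by linarith
  field_simp
  ring

lemma integral_Ioi_one_add_rpow_sub_one_sub_mul_mul_rpow (hα₁ : 1 < α) (hα₂ : α < 2)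
    (hβ₀ : 0 ≤ β) (hβ₁ : β ≤ 1) :
    ∫ z in Ioi (0:ℝ), ((1 + z) ^ β - 1 - β * z) * z ^ (-α - 1)
      = β * (β - 1) * (Gamma (2 - α) * Gamma (α - β) / Gamma (2 - β)) / (α * (α - 1)) := by
  have hf_bound (z : ℝ) (hz : z ∈ Ioi 0) : |(1 + z) ^ β - 1 - β * z| ≤ z ^ (1:ℝ) * min z 1 := by
    simpa only [rpow_one] using abs_one_add_rpow_sub_one_sub_mul_le hβ₀ hβ₁ hz.out.le
  have hf'_bound (z : ℝ) (hz : z ∈ Ioi 0) :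
      |β * ((1 + z) ^ (β - 1) - 1)| ≤ z ^ (0:ℝ) * min z 1 := by
    simpa only [rpow_zero, one_mul] using abs_mul_one_add_rpow_sub_one_sub_one_le hβ₀ hβ₁ hz.out.le
  have hf'_int : IntegrableOn (fun z => β * ((1 + z) ^ (β - 1) - 1) * z ^ (-α)) (Ioi 0) :=
    integrableOn_Ioi_of_abs_le_rpow_mul_min_one (r := 0 + -α) (by fun_prop) (by linarith)
      (by linarith) fun z hz => abs_mul_rpow_le_rpow_mul_min_one hz (hf'_bound z hz)
  rw [integral_Ioi_mul_rpow_sub_one (by linarith) (by linarith) (by linarith)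
    (fun z hz => hasDerivAt_one_add_rpow_sub_one_sub_mul (by linarith [hz.out])) hf_bound hf'_int,
    integral_Ioi_mul_one_add_rpow_sub_one_sub_one_mul_rpow hα₁ hα₂ hβ₀ hβ₁]
  have : α - 1 ≠ 0 := by linarith
  field_simp

end OneAddRpow

/-- Lemma 3.2, fourth identity: for `α ∈ (1,2)` and `0 < β < 1`,
`∫_0^∞ [(1+z)^β − 1 − βz] μ_α(dz) = −β(1−β)Γ(α−β)/(Γ(α)Γ(2−β))`, where
`μ_α(dz) = (α(α−1)/(Γ(α)Γ(2−α))) z^{−1−α} dz` on `(0,∞)`. -/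
theorem stable_measure_integral_four (α β : ℝ) (hα₁ : 1 < α) (hα₂ : α < 2)
    (hβ₀ : 0 < β) (hβ : β < 1) :
    ∫ z in Ioi (0 : ℝ),
        ((1 + z) ^ β - 1 - β * z) *
          (α * (α - 1) / (Real.Gamma α * Real.Gamma (2 - α)) * z ^ (-1 - α))
      = -(β * (1 - β) * Real.Gamma (α - β) / (Real.Gamma α * Real.Gamma (2 - β))) := by
  have hΓα := (Gamma_pos_of_pos (by linarith : 0 < α)).ne'
  have hΓ₂α := (Gamma_pos_of_pos (by linarith : 0 < 2 - α)).ne'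
  have hΓ₂β := (Gamma_pos_of_pos (by linarith : 0 < 2 - β)).ne'
  have hα₁' : α - 1 ≠ 0 := by linarith
  calc _ = α * (α - 1) / (Gamma α * Gamma (2 - α))
        * ∫ z in Ioi (0:ℝ), ((1 + z) ^ β - 1 - β * z) * z ^ (-α - 1) := by
        rw [← integral_const_mul]
        congr 1 with z
        rw [show -1 - α = -α - 1 by ring]
        ring
    _ = _ := by
        rw [integral_Ioi_one_add_rpow_sub_one_sub_mul_mul_rpow hα₁ hα₂ hβ₀.le hβ.le]
        field_simp
        ring
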